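/- Let g(L_1,...,L_k) = Σ_{r=1}^R a_r ∏_{i=1}^k f_{r,i}(L_i) be a symmetric function of its k variables, with each f_{r,i} sufficiently differentiable. Then Δ(d/dL)^2 g(L_1,...,L_k) evaluated at L_1 = ... = L_k = L equals k! Σ_{r=1}^R a_r det_{k×k}( f_{r,i}^{(i+j-2)}(L) ). -/

import Mathlib

/-!
Both `∂/∂L_i` and hence `Δ(d/dL)` act on `g = ∑ r, a r * ∏ j, f r j (L j)` factor by factor, so
on the diagonal `Δ(d/dL)² g = ∑_{τ,σ} sgn τ sgn σ D(τ + σ)`, where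
`D(m) = ∑ r, a r * ∏ j, f_{r,j}^{(m j)}(L)`. The symmetry of `g` makes `D` invariant under
permutations of the exponent vector `m`, so the `(τ, σ)` term equals the `(1, σ τ⁻¹)` term and
the sum over `τ` contributes a factor `k!`. What remains, `∑_π sgn π D(id + π)`, is the
Leibniz expansion of `∑ r, a r * det (f_{r,i}^{(i+j)}(L))`.
-/

open Finset

open Finset

/-- Partial derivative in the `i`-th coordinate of a function of `k` complex variables. -/
noncomputable def pderivCoord {k : ℕ} (i : Fin k) (g : (Fin k → ℂ) → ℂ) :
    (Fin k → ℂ) → ℂ :=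
  fun x => deriv (fun t => g (Function.update x i t)) (x i)

/-- Apply the operator `∏ i (∂/∂L_i)^(m i)` to `g`. -/
noncomputable def applyPows {k : ℕ} (m : Fin k → ℕ) (g : (Fin k → ℂ) → ℂ) :
    (Fin k → ℂ) → ℂ :=
  (List.finRange k).foldr (fun i F => (pderivCoord i)^[m i] ∘ F) id g

/-- The Vandermonde differential operator
`Δ(d/dL) = det ((∂/∂L_i)^(j-1)) = ∏_{i<j} (∂/∂L_j - ∂/∂L_i)`. -/
noncomputable def vandermondeOp {k : ℕ} (g : (Fin k → ℂ) → ℂ) : (Fin k → ℂ) → ℂ :=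
  fun x => ∑ σ : Equiv.Perm (Fin k),
    (Equiv.Perm.sign σ : ℤ) • applyPows (fun i => (σ i : ℕ)) g x

lemma sum_sign_smul_sum_sign_smul {α M : Type*} [Fintype α] [DecidableEq α] [AddCommGroup M]
    (G : Equiv.Perm α → Equiv.Perm α → M) (hG : ∀ τ σ ρ, G (τ * ρ) (σ * ρ) = G τ σ) :
    ∑ τ : Equiv.Perm α, (Equiv.Perm.sign τ : ℤ) • ∑ σ : Equiv.Perm α,
        (Equiv.Perm.sign σ : ℤ) • G τ σ
      = (Fintype.card α).factorial • ∑ π : Equiv.Perm α, (Equiv.Perm.sign π : ℤ) • G 1 π := by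
  have hτ : ∀ τ : Equiv.Perm α, (Equiv.Perm.sign τ : ℤ) • ∑ σ : Equiv.Perm α,
      (Equiv.Perm.sign σ : ℤ) • G τ σ = ∑ π : Equiv.Perm α, (Equiv.Perm.sign π : ℤ) • G 1 π := by
    intro τ
    rw [← Equiv.sum_comp (Equiv.mulRight τ), smul_sum]
    refine sum_congr rfl fun π _ => ?_
    have hG1 : G τ (π * τ) = G 1 π := by simpa using hG 1 π τ
    have hsign : (Equiv.Perm.sign τ : ℤ) * Equiv.Perm.sign (π * τ) = Equiv.Perm.sign π := by
      rw [← Units.val_mul, map_mul, mul_left_comm, Int.units_mul_self, mul_one]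
    rw [Equiv.coe_mulRight, hG1, smul_smul, hsign]
  rw [sum_congr rfl fun τ _ => hτ τ, sum_const, card_univ, Fintype.card_perm]

section SumProd

variable {k : ℕ} {ι : Type*} [Fintype ι]

def sumProd (a : ι → ℂ) (f : ι → Fin k → ℂ → ℂ) (x : Fin k → ℂ) : ℂ :=
  ∑ r, a r * ∏ j, f r j (x j)

lemma prod_update_apply_update (F : Fin k → ℂ → ℂ) (i : Fin k) (h : ℂ → ℂ)
    (x : Fin k → ℂ) (t : ℂ) :
    ∏ j, Function.update F i h j (Function.update x i t j)
      = h t * ∏ j ∈ univ.erase i, F j (x j) := by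
  rw [← mul_prod_erase _ _ (mem_univ i), Function.update_self, Function.update_self]
  congr 1
  refine prod_congr rfl fun j hj => ?_
  rw [Function.update_of_ne (ne_of_mem_erase hj), Function.update_of_ne (ne_of_mem_erase hj)]

lemma pderivCoord_sumProd (i : Fin k) (a : ι → ℂ) (f : ι → Fin k → ℂ → ℂ)
    (hf : ∀ r, Differentiable ℂ (f r i)) :
    pderivCoord i (sumProd a f)
      = sumProd a (fun r => Function.update (f r) i (deriv (f r i))) := by
  funext x
  have hslice : (fun t => sumProd a f (Function.update x i t))
      = fun t => ∑ r, a r * (f r i t * ∏ j ∈ univ.erase i, f r j (x j)) := by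
    funext t
    simpa only [sumProd, Function.update_eq_self] using
      sum_congr rfl fun r _ => congrArg (a r * ·) (prod_update_apply_update (f r) i (f r i) x t)
  have hdiff : ∀ r, DifferentiableAt ℂ
      (fun t => a r * (f r i t * ∏ j ∈ univ.erase i, f r j (x j))) (x i) :=
    fun r => ((hf r _).mul_const _).const_mul _
  rw [pderivCoord, hslice, deriv_fun_sum fun r _ => hdiff r]
  refine sum_congr rfl fun r _ => ?_
  rw [deriv_const_mul _ ((hf r _).mul_const _), deriv_mul_const (hf r _),
    ← prod_update_apply_update (f r) i _ x (x i), Function.update_eq_self]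

lemma iterate_pderivCoord_sumProd (i : Fin k) (m : ℕ) (a : ι → ℂ) (f : ι → Fin k → ℂ → ℂ)
    (hf : ∀ r, ContDiff ℂ m (f r i)) :
    (pderivCoord i)^[m] (sumProd a f)
      = sumProd a (fun r => Function.update (f r) i (deriv^[m] (f r i))) := by
  induction m with
  | zero => simp
  | succ m ih =>
    have hdiff : ∀ r, Differentiable ℂ (deriv^[m] (f r i)) := fun r =>
      (ContDiff.iterate_deriv' 1 m ((hf r).of_le (by norm_cast; omega))).differentiable
        one_ne_zero
    rw [Function.iterate_succ_apply', ih fun r => (hf r).of_le (by norm_cast; omega),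
      pderivCoord_sumProd i a _ fun r => by simpa using hdiff r]
    simp only [Function.update_self, Function.update_idem, Function.iterate_succ_apply']

lemma foldr_iterate_pderivCoord_sumProd (l : List (Fin k)) (hl : l.Nodup) (m : Fin k → ℕ)
    (a : ι → ℂ) (f : ι → Fin k → ℂ → ℂ) (hf : ∀ r j, ContDiff ℂ (m j) (f r j)) :
    l.foldr (fun i F => (pderivCoord i)^[m i] ∘ F) id (sumProd a f)
      = sumProd a (fun r j => if j ∈ l then deriv^[m j] (f r j) else f r j) := by
  induction l with
  | nil => simp
  | cons i l ih =>
    have hi : i ∉ l := (List.nodup_cons.mp hl).1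
    rw [List.foldr_cons, Function.comp_apply, ih hl.of_cons,
      iterate_pderivCoord_sumProd i (m i) a _ fun r => by simpa [hi] using hf r i]
    congr! 3 with r j
    by_cases hji : j = i
    · subst hji; simp [hi]
    · simp [hji]

lemma applyPows_sumProd (m : Fin k → ℕ) (a : ι → ℂ) (f : ι → Fin k → ℂ → ℂ)
    (hf : ∀ r j, ContDiff ℂ (m j) (f r j)) :
    applyPows m (sumProd a f) = sumProd a (fun r j => deriv^[m j] (f r j)) := by
  simp [applyPows, foldr_iterate_pderivCoord_sumProd _ (List.nodup_finRange k) m a f hf]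

lemma vandermondeOp_sumProd (a : ι → ℂ) (f : ι → Fin k → ℂ → ℂ)
    (hf : ∀ r j, ContDiff ℂ (k - 1 : ℕ) (f r j)) :
    vandermondeOp (sumProd a f)
      = sumProd (fun p : Equiv.Perm (Fin k) × ι => (Equiv.Perm.sign p.1 : ℤ) • a p.2)
          (fun p j => deriv^[p.1 j] (f p.2 j)) := by
  funext x
  have hle : ∀ (σ : Equiv.Perm (Fin k)) j, ((σ j : ℕ) : WithTop ℕ∞) ≤ (k - 1 : ℕ) := fun σ j => by
    norm_cast; omega
  simp only [vandermondeOp, sumProd, Fintype.sum_prod_type, smul_mul_assoc, ← smul_sum]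
  refine sum_congr rfl fun σ _ => ?_
  rw [applyPows_sumProd _ a f fun r j => (hf r j).of_le (hle σ j), sumProd]

lemma vandermondeOp_vandermondeOp_sumProd (a : ι → ℂ) (f : ι → Fin k → ℂ → ℂ)
    (hf : ∀ r j, ContDiff ℂ (2 * k - 2 : ℕ) (f r j)) (x : Fin k → ℂ) :
    vandermondeOp (vandermondeOp (sumProd a f)) x
      = ∑ τ : Equiv.Perm (Fin k), (Equiv.Perm.sign τ : ℤ) • ∑ σ : Equiv.Perm (Fin k),
          (Equiv.Perm.sign σ : ℤ) • sumProd a (fun r j => deriv^[τ j + σ j] (f r j)) x := by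
  have hf' : ∀ (p : Equiv.Perm (Fin k) × ι) j, ContDiff ℂ (k - 1 : ℕ) (deriv^[p.1 j] (f p.2 j)) :=
    fun p j => ContDiff.iterate_deriv' _ _ ((hf p.2 j).of_le (by norm_cast; omega))
  rw [vandermondeOp_sumProd a f fun r j => (hf r j).of_le (by norm_cast; omega),
    vandermondeOp_sumProd _ _ hf']
  simp only [sumProd, Fintype.sum_prod_type, Function.iterate_add_apply, smul_mul_assoc, smul_sum]

lemma sumProd_comp_perm (σ : Equiv.Perm (Fin k)) (a : ι → ℂ) (f : ι → Fin k → ℂ → ℂ)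
    (x : Fin k → ℂ) :
    sumProd a (fun r j => f r (σ j)) (x ∘ σ) = sumProd a f x := by
  simp only [sumProd, Function.comp_apply]
  exact sum_congr rfl fun r _ => congrArg _ (Equiv.prod_comp σ fun j => f r j (x j))

lemma sumProd_iterate_deriv_comp_perm {n : ℕ} (a : ι → ℂ) (f : ι → Fin k → ℂ → ℂ)
    (hf : ∀ r j, ContDiff ℂ n (f r j))
    (hsym : ∀ (σ : Equiv.Perm (Fin k)) x, sumProd a f (x ∘ σ) = sumProd a f x)
    (σ : Equiv.Perm (Fin k)) (m : Fin k → ℕ) (hm : ∀ j, m j ≤ n) (L : ℂ) :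
    sumProd a (fun r j => deriv^[m (σ j)] (f r j)) (fun _ => L)
      = sumProd a (fun r j => deriv^[m j] (f r j)) (fun _ => L) := by
  have hle : ∀ j, ((m j : ℕ) : WithTop ℕ∞) ≤ n := fun j => by exact_mod_cast hm j
  -- The symmetry of `g` says that the reindexed family `f r ∘ σ⁻¹` defines the same function.
  have hfσ : sumProd a (fun r j => f r (σ⁻¹ j)) = sumProd a f := funext fun x => by
    simpa [Function.comp_def] using (sumProd_comp_perm σ⁻¹ a f (x ∘ σ)).trans (hsym σ x)
  have hderiv := congrFun (congrArg (applyPows m) hfσ) fun _ => L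
  rw [applyPows_sumProd m a _ fun r j => (hf r _).of_le (hle j),
    applyPows_sumProd m a _ fun r j => (hf r _).of_le (hle j)] at hderiv
  have hperm := sumProd_comp_perm σ a (fun r j => deriv^[m j] (f r (σ⁻¹ j))) fun _ => L
  simp only [Equiv.Perm.coe_inv, Equiv.symm_apply_apply] at hperm
  exact hperm.trans hderiv

lemma sum_mul_det_iterate_deriv (a : ι → ℂ) (f : ι → Fin k → ℂ → ℂ) (L : ℂ) :
    ∑ r, a r * (Matrix.of fun i j : Fin k => iteratedDeriv ((i : ℕ) + (j : ℕ)) (f r i) L).det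
      = ∑ π : Equiv.Perm (Fin k), (Equiv.Perm.sign π : ℤ) •
          sumProd a (fun r j => deriv^[j + π j] (f r j)) (fun _ => L) := by
  simp only [← Matrix.det_transpose (Matrix.of _), Matrix.det_apply', Matrix.transpose_apply,
    Matrix.of_apply, iteratedDeriv_eq_iterate, sumProd, mul_sum, smul_sum]
  rw [sum_comm]
  refine sum_congr rfl fun π _ => sum_congr rfl fun r _ => ?_
  rw [zsmul_eq_mul]
  ring

end SumProd

theorem stmt_6_general (k : ℕ) (R : ℕ) (a : Fin R → ℂ)
    (f : Fin R → Fin k → ℂ → ℂ) (hf : ∀ r i, ContDiff ℂ ((2 * k - 2 : ℕ)) (f r i))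
    (hsym : ∀ σ : Equiv.Perm (Fin k), ∀ x : Fin k → ℂ,
      (∑ r, a r * ∏ i, f r i ((x ∘ σ) i)) = ∑ r, a r * ∏ i, f r i (x i))
    (L : ℂ) :
    vandermondeOp (vandermondeOp (fun x => ∑ r, a r * ∏ i, f r i (x i))) (fun _ => L)
      = (Nat.factorial k : ℂ) * ∑ r, a r *
          Matrix.det (Matrix.of fun i j : Fin k =>
            iteratedDeriv ((i : ℕ) + (j : ℕ)) (f r i) L) := by
  have hinvariant : ∀ τ σ ρ : Equiv.Perm (Fin k),
      sumProd a (fun r j => deriv^[(τ * ρ) j + (σ * ρ) j] (f r j)) (fun _ => L)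
        = sumProd a (fun r j => deriv^[τ j + σ j] (f r j)) (fun _ => L) := fun τ σ ρ =>
    sumProd_iterate_deriv_comp_perm a f hf hsym ρ (fun j => τ j + σ j) (fun j => by omega) L
  have hdouble := sum_sign_smul_sum_sign_smul
    (fun τ σ => sumProd a (fun r j => deriv^[τ j + σ j] (f r j)) fun _ => L) hinvariant
  simp only [Equiv.Perm.one_apply, Fintype.card_fin] at hdouble
  rw [sum_mul_det_iterate_deriv, ← nsmul_eq_mul, ← hdouble]
  exact vandermondeOp_vandermondeOp_sumProd a f hf _

theorem stmt_6 (k : ℕ) (hk : 1 ≤ k) (R : ℕ) (hR : 1 ≤ R) (a : Fin R → ℂ)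
    (f : Fin R → Fin k → ℂ → ℂ) (hf : ∀ r i, ContDiff ℂ ((2 * k - 2 : ℕ)) (f r i))
    (hsym : ∀ σ : Equiv.Perm (Fin k), ∀ x : Fin k → ℂ,
      (∑ r, a r * ∏ i, f r i ((x ∘ σ) i)) = ∑ r, a r * ∏ i, f r i (x i))
    (L : ℂ) :
    vandermondeOp (vandermondeOp (fun x => ∑ r, a r * ∏ i, f r i (x i))) (fun _ => L)
      = (Nat.factorial k : ℂ) * ∑ r, a r *
          Matrix.det (Matrix.of fun i j : Fin k =>
            iteratedDeriv ((i : ℕ) + (j : ℕ)) (f r i) L) :=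
  stmt_6_general k R a f hf hsym L
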